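/- For any fixed C ≥ 0 (possibly +∞) and any integer T ≥ 1, the map z ↦ Ψ_-^{-1}(z,C) is non-decreasing with respect to the partial order ⪰ on [0,1]^T; that is, if z ⪰ z' then Ψ_-^{-1}(z,C) ≥ Ψ_-^{-1}(z',C). -/

import Mathlib

open MeasureTheory Set

/-- Extended-real logarithm: `log ⊤ = ⊤`, `log x = -∞` for `x ≤ 0` (in particular `log 0 = -∞`). -/
noncomputable def elog (x : EReal) : EReal :=
  if x = ⊤ then ⊤ else if x ≤ 0 then ⊥ else ((Real.log x.toReal : ℝ) : EReal)

/-- Lower endpoint `-1/(1-μ)` of the betting interval, with the convention `1/0 = +∞`. -/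
noncomputable def betLower (μ : ℝ) : EReal := if μ = 1 then ⊥ else ((-(1 - μ)⁻¹ : ℝ) : EReal)

/-- Upper endpoint `1/μ` of the betting interval, with the convention `1/0 = +∞`. -/
noncomputable def betUpper (μ : ℝ) : EReal := if μ = 0 then ⊤ else ((μ⁻¹ : ℝ) : EReal)

/-- The betting interval `A_μ = [-1/(1-μ), 1/μ]` (as a set of extended reals). -/
noncomputable def betSet (μ : ℝ) : Set EReal := Set.Icc (betLower μ) (betUpper μ)

/-- `(1/T) ∑_t log(1 + α (z_t - μ))`, with EReal conventions (`0 * ±∞ = 0`, `log 0 = -∞`). -/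
noncomputable def betTerm {T : ℕ} (z : Fin T → ℝ) (μ : ℝ) (α : EReal) : EReal :=
  (((T : ℝ)⁻¹ : ℝ) : EReal) * ∑ t : Fin T, elog (1 + α * ((z t - μ : ℝ) : EReal))

/-- `Ψ(z, μ) = sup_{α ∈ A_μ} (1/T) ∑_t log(1 + α (z_t - μ))`. -/
noncomputable def Psi {T : ℕ} (z : Fin T → ℝ) (μ : ℝ) : EReal :=
  ⨆ α ∈ betSet μ, betTerm z μ α

/-- `μ_z = (1/T) ∑_t z_t`. -/
noncomputable def muz {T : ℕ} (z : Fin T → ℝ) : ℝ := (T : ℝ)⁻¹ * ∑ t, z t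

/-- The upper inverse `Ψ_+^{-1}(z, C) = sup {μ ∈ [0,1] : Ψ(z,μ) ≤ C}`. -/
noncomputable def PsiInvPlus {T : ℕ} (z : Fin T → ℝ) (C : EReal) : ℝ :=
  sSup {μ : ℝ | μ ∈ Set.Icc (0 : ℝ) 1 ∧ Psi z μ ≤ C}

/-- The lower inverse `Ψ_-^{-1}(z, C) = inf {μ ∈ [0,1] : Ψ(z,μ) ≤ C}`. -/
noncomputable def PsiInvMinus {T : ℕ} (z : Fin T → ℝ) (C : EReal) : ℝ :=
  sInf {μ : ℝ | μ ∈ Set.Icc (0 : ℝ) 1 ∧ Psi z μ ≤ C}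

/-!
Since `log (1 + x) ≤ x`, a real bet `α` earns at most `α (μ_z - μ)`; hence `Ψ(z, μ_z) ≤ 0`, so
the mean `μ_{z'}` is always feasible for `z'`. For `μ ≤ μ_{z'}`, non-positive bets earn nothing
against `z'`, while non-negative bets earn at least as much against `z ⪰ z'` as against `z'`. So every
`μ < μ_{z'}` feasible for `z` is feasible for `z'`, and the infimum for `z'` is at most that
for `z`.
-/

open Finset
open scoped BigOperators

lemma csInf_le_csInf_of_forall_lt_mem {α : Type*} [ConditionallyCompleteLinearOrder α]
    {s t : Set α} (ht : BddBelow t) (hs : s.Nonempty) {m : α} (hm : m ∈ t)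
    (h : ∀ b ∈ s, b < m → b ∈ t) : sInf t ≤ sInf s :=
  le_csInf hs fun b hb => (le_or_gt m b).elim (fun hmb => (csInf_le ht hm).trans hmb)
    fun hbm => csInf_le ht (h b hb hbm)

lemma EReal.coe_finset_sum {ι : Type*} (s : Finset ι) (f : ι → ℝ) :
    ((∑ i ∈ s, f i : ℝ) : EReal) = ∑ i ∈ s, (f i : EReal) :=
  map_sum (⟨⟨Real.toEReal, EReal.coe_zero⟩, EReal.coe_add⟩ : ℝ →+ EReal) f s

lemma elog_eq_log_toENNReal (x : EReal) : elog x = ENNReal.log x.toENNReal := by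
  unfold elog
  split_ifs with htop hnonpos
  · simp [htop]
  · simp [EReal.toENNReal_of_nonpos hnonpos]
  · have hpos : 0 < x.toReal := EReal.toReal_pos (not_le.1 hnonpos) htop
    rw [EReal.toENNReal_of_ne_top htop, ENNReal.log_ofReal_of_pos hpos]

lemma elog_monotone : Monotone elog := fun x y hxy => by
  simpa only [elog_eq_log_toENNReal] using
    ENNReal.log_monotone (EReal.toENNReal_le_toENNReal hxy)

lemma elog_one : elog 1 = 0 := by
  have h : (1 : EReal) ≠ ⊤ := EReal.coe_ne_top 1
  simp [elog, h]

lemma elog_coe_le (r : ℝ) : elog r ≤ ((r - 1 : ℝ) : EReal) := by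
  rw [elog_eq_log_toENNReal, EReal.toENNReal_of_ne_top (EReal.coe_ne_top r), EReal.toReal_coe,
    ENNReal.log_ofReal]
  split_ifs with hr
  · exact bot_le
  · exact EReal.coe_le_coe_iff.2 (Real.log_le_sub_one_of_pos (not_le.1 hr))

section mean

variable {T : ℕ}

lemma muz_eq_expect (z : Fin T → ℝ) : muz z = 𝔼 t, z t := by
  rw [expect_eq_sum_div_card, card_univ, Fintype.card_fin, muz, div_eq_inv_mul]

variable {z : Fin T → ℝ} {c : ℝ}

lemma muz_mem_Icc (hT : 0 < T) (hz : ∀ t, z t ∈ Set.Icc (0 : ℝ) 1) :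
    muz z ∈ Set.Icc (0 : ℝ) 1 := by
  have : Nonempty (Fin T) := ⟨⟨0, hT⟩⟩
  rw [muz_eq_expect]
  exact ⟨expect_nonneg fun t _ => (hz t).1, expect_le univ_nonempty fun t _ => (hz t).2⟩

lemma eq_of_forall_le_of_le_muz (hz : ∀ t, z t ≤ c) (h : c ≤ muz z) (t : Fin T) : z t = c := by
  by_contra hne
  have := expect_lt (fun t _ => hz t) ⟨t, mem_univ t, (hz t).lt_of_ne hne⟩
  rw [muz_eq_expect] at h
  exact this.not_ge h

lemma eq_of_forall_ge_of_muz_le (hz : ∀ t, c ≤ z t) (h : muz z ≤ c) (t : Fin T) : z t = c := by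
  by_contra hne
  have := lt_expect (fun t _ => hz t) ⟨t, mem_univ t, (hz t).lt_of_ne (Ne.symm hne)⟩
  rw [muz_eq_expect] at h
  exact this.not_ge h

end mean

lemma eq_one_of_bot_mem_betSet {μ : ℝ} (h : ⊥ ∈ betSet μ) : μ = 1 := by
  by_contra hne
  have := le_bot_iff.1 h.1
  rw [betLower, if_neg hne] at this
  exact EReal.coe_ne_bot _ this

lemma eq_zero_of_top_mem_betSet {μ : ℝ} (h : ⊤ ∈ betSet μ) : μ = 0 := by
  by_contra hne
  have := top_le_iff.1 h.2
  rw [betUpper, if_neg hne] at this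
  exact EReal.coe_ne_top _ this

section betTerm

variable {T : ℕ}

lemma betTerm_eq_zero_of_forall_eq {z : Fin T → ℝ} {μ : ℝ} (h : ∀ t, z t = μ) (α : EReal) :
    betTerm z μ α = 0 := by
  simp [betTerm, h, elog_one]

lemma betTerm_le_betTerm {z z' : Fin T → ℝ} (hord : ∀ t, z' t ≤ z t) (μ : ℝ) {α : EReal}
    (hα : 0 ≤ α) : betTerm z' μ α ≤ betTerm z μ α := by
  refine mul_le_mul_of_nonneg_left (sum_le_sum fun t _ => elog_monotone ?_)
    (EReal.coe_nonneg.2 (by positivity))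
  exact add_le_add_right
    (mul_le_mul_of_nonneg_left (EReal.coe_le_coe_iff.2 (sub_le_sub_right (hord t) μ)) hα) 1

lemma betTerm_coe_le (hT : 0 < T) (z : Fin T → ℝ) (μ a : ℝ) :
    betTerm z μ a ≤ ((a * (muz z - μ) : ℝ) : EReal) := by
  have hterm (t : Fin T) :
      elog (1 + a * ((z t - μ : ℝ) : EReal)) ≤ ((a * (z t - μ) : ℝ) : EReal) := by
    have := elog_coe_le (1 + a * (z t - μ))
    rwa [add_sub_cancel_left, EReal.coe_add, EReal.coe_mul, EReal.coe_one] at this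
  have hmean : (T : ℝ)⁻¹ * ∑ t, a * (z t - μ) = a * (muz z - μ) := by
    have : (T : ℝ) ≠ 0 := by positivity
    simp only [muz, ← mul_sum, sum_sub_distrib, sum_const, card_univ, Fintype.card_fin,
      nsmul_eq_mul]
    field_simp
  calc betTerm z μ a
      ≤ (((T : ℝ)⁻¹ : ℝ) : EReal) * ((∑ t, a * (z t - μ) : ℝ) : EReal) := by
        rw [EReal.coe_finset_sum]
        exact mul_le_mul_of_nonneg_left (sum_le_sum fun t _ => hterm t)
          (EReal.coe_nonneg.2 (by positivity))
    _ = ((a * (muz z - μ) : ℝ) : EReal) := by rw [← EReal.coe_mul, hmean]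

end betTerm

section Psi

variable {T : ℕ}

lemma Psi_muz_nonpos (hT : 0 < T) {z : Fin T → ℝ} (hz : ∀ t, z t ∈ Set.Icc (0 : ℝ) 1) :
    Psi z (muz z) ≤ 0 := by
  refine iSup₂_le fun α hα => ?_
  induction α using EReal.rec with
  | bot =>
    have hμ := eq_one_of_bot_mem_betSet hα
    refine (betTerm_eq_zero_of_forall_eq (fun t => ?_) ⊥).le
    rw [hμ]
    exact eq_of_forall_le_of_le_muz (fun t => (hz t).2) hμ.ge t
  | coe a => simpa using betTerm_coe_le hT z (muz z) a
  | top =>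
    have hμ := eq_zero_of_top_mem_betSet hα
    refine (betTerm_eq_zero_of_forall_eq (fun t => ?_) ⊤).le
    rw [hμ]
    exact eq_of_forall_ge_of_muz_le (fun t => (hz t).1) hμ.le t

lemma Psi_le_max_of_le_muz (hT : 0 < T) {z z' : Fin T → ℝ} (hz' : ∀ t, z' t ≤ 1)
    (hord : ∀ t, z' t ≤ z t) {μ : ℝ} (hμ : μ ≤ muz z') : Psi z' μ ≤ max 0 (Psi z μ) := by
  refine iSup₂_le fun α hα => ?_
  rcases le_total 0 α with hα0 | hα0
  · exact (betTerm_le_betTerm hord μ hα0).trans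
      ((le_iSup₂ (f := fun α (_ : α ∈ betSet μ) => betTerm z μ α) α hα).trans (le_max_right _ _))
  refine le_trans ?_ (le_max_left _ _)
  induction α using EReal.rec with
  | bot =>
    have hμ1 := eq_one_of_bot_mem_betSet hα
    refine (betTerm_eq_zero_of_forall_eq (fun t => ?_) ⊥).le
    rw [hμ1]
    exact eq_of_forall_le_of_le_muz hz' (hμ1 ▸ hμ) t
  | coe a =>
    refine (betTerm_coe_le hT z' μ a).trans (EReal.coe_nonpos.2 ?_)
    exact mul_nonpos_of_nonpos_of_nonneg (EReal.coe_nonpos.1 hα0) (sub_nonneg.2 hμ)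
  | top => exact absurd hα0 (by simp)

end Psi

/-- For fixed `C ≥ 0` (possibly `+∞`), `z ↦ Ψ_-^{-1}(z, C)` is non-decreasing w.r.t. the
coordinatewise order `⪰` on `[0,1]^T`. -/
theorem psiInvMinus_mono {T : ℕ} (hT : 1 ≤ T) (C : EReal) (hC : 0 ≤ C)
    (z z' : Fin T → ℝ)
    (hz : ∀ t, z t ∈ Set.Icc (0 : ℝ) 1) (hz' : ∀ t, z' t ∈ Set.Icc (0 : ℝ) 1)
    (hord : ∀ t, z' t ≤ z t) :
    PsiInvMinus z' C ≤ PsiInvMinus z C := by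
  have hmuz_mem {y : Fin T → ℝ} (hy : ∀ t, y t ∈ Set.Icc (0 : ℝ) 1) :
      muz y ∈ {μ : ℝ | μ ∈ Set.Icc (0 : ℝ) 1 ∧ Psi y μ ≤ C} :=
    ⟨muz_mem_Icc hT hy, (Psi_muz_nonpos hT hy).trans hC⟩
  refine csInf_le_csInf_of_forall_lt_mem ⟨0, fun _ hμ => hμ.1.1⟩ ⟨_, hmuz_mem hz⟩
    (hmuz_mem hz') fun μ hμ hlt => ⟨hμ.1, ?_⟩
  exact (Psi_le_max_of_le_muz hT (fun t => (hz' t).2) hord hlt.le).trans (max_le hC hμ.2)
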